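/- arXiv:2503.03337 — 3 statements merged into one kernel-verified Lean document; each statement's English description precedes it below -/
import Mathlib

section
/- Let R₁ ∈ k(x)^{m×p} and R₂ ∈ k(x)^{p×h} be rational matrices and R = R₁R₂. Then for every ℓ ≥ 0, φ_ℓ(R) divides φ_ℓ(R₁)·φ_ℓ(R₂). -/
/-!
Every `s × s` minor of `R₁ * R₂` is, by the Cauchy–Binet formula, a sum of products of an
`s`-minor of `R₁` with an `s`-minor of `R₂`. Each product has denominator dividing
`φ_ℓ(R₁) φ_ℓ(R₂)`, hence so does the sum, and `φ_ℓ(R₁ R₂)` is the lcm of these denominators.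

Cauchy–Binet itself comes from expanding `det (A * B)` multilinearly in the rows: the terms whose
column choice `f` is not injective vanish, and an injective `f` is uniquely the increasing
enumeration of its image composed with a permutation, over which the sum collapses to
`det A_S * det B_S`.
-/

open Polynomial

/-- The determinantal denominator `φ_ℓ(R)`: the monic least common denominator in `k[x]`
of all minors of the rational matrix `R` of size at most `ℓ` (with `φ_0(R) = 1`). -/
noncomputable def detDen {k : Type*} [Field k] [DecidableEq k] {m p : ℕ} (ℓ : ℕ)
    (R : Matrix (Fin m) (Fin p) (RatFunc k)) : Polynomial k :=
  (Finset.univ : Finset (Σ s : Fin (ℓ + 1), (Fin (s : ℕ) → Fin m) × (Fin (s : ℕ) → Fin p))).lcm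
    (fun t => ((R.submatrix t.2.1 t.2.2).det).denom)

open Finset

section EmbeddingOfFinsetPerm

variable {n : Type*} [LinearOrder n] {s : ℕ}

def embOfFinsetPerm (q : {S : Finset n // #S = s} × Equiv.Perm (Fin s)) : Fin s ↪ n :=
  q.2.toEmbedding.trans (q.1.1.orderEmbOfFin q.1.2).toEmbedding

theorem range_embOfFinsetPerm (q : {S : Finset n // #S = s} × Equiv.Perm (Fin s)) :
    Set.range (embOfFinsetPerm q) = q.1.1 := by
  rw [embOfFinsetPerm, Function.Embedding.coe_trans, Set.range_comp, Equiv.coe_toEmbedding,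
    Equiv.range_eq_univ, Set.image_univ]
  exact Finset.range_orderEmbOfFin _ _

theorem embOfFinsetPerm_injective : Function.Injective (embOfFinsetPerm (n := n) (s := s)) := by
  rintro ⟨⟨S, hS⟩, σ⟩ ⟨⟨T, hT⟩, τ⟩ h
  obtain rfl : S = T := by
    have := congrArg Set.range (congrArg DFunLike.coe h)
    rwa [range_embOfFinsetPerm, range_embOfFinsetPerm, Finset.coe_inj] at this
  exact Prod.ext rfl (Equiv.ext fun i => (S.orderEmbOfFin hS).injective (DFunLike.congr_fun h i))

theorem embOfFinsetPerm_bijective [Fintype n] :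
    Function.Bijective (embOfFinsetPerm (n := n) (s := s)) := by
  refine (Fintype.bijective_iff_injective_and_card _).mpr ⟨embOfFinsetPerm_injective, ?_⟩
  rw [Fintype.card_prod, Fintype.card_finset_len, Fintype.card_perm, Fintype.card_embedding_eq,
    Fintype.card_fin, Nat.descFactorial_eq_factorial_mul_choose, mul_comm]

end EmbeddingOfFinsetPerm

namespace Matrix

variable {R : Type*} [CommRing R] {m n o : Type*}

theorem det_mul_eq_sum_prod_mul_det_submatrix [Fintype m] [DecidableEq m] [Fintype n]
    (A : Matrix m n R) (B : Matrix n m R) :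
    (A * B).det = ∑ f : m → n, (∏ i, A i (f i)) * (B.submatrix f id).det := by
  have hrows : (A * B).det =
      (detRowAlternating : (m → R) [⋀^m]→ₗ[R] R).toMultilinearMap fun i => ∑ j, A i j • B j := by
    congr 1
    ext i k
    simp [mul_apply, Finset.sum_apply]
  rw [hrows, MultilinearMap.map_sum]
  simp only [MultilinearMap.map_smul_univ, smul_eq_mul]
  rfl

theorem det_submatrix_eq_zero_of_not_injective [Fintype m] [DecidableEq m] (B : Matrix n m R)
    {f : m → n} (hf : ¬ Function.Injective f) : (B.submatrix f id).det = 0 := by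
  obtain ⟨i, j, hfij, hij⟩ := Function.not_injective_iff.mp hf
  exact det_zero_of_row_eq hij (congrArg B hfij)

theorem sum_prod_mul_det_submatrix_eq_sum_embedding [Fintype m] [DecidableEq m] [Fintype n]
    [DecidableEq n] (A : Matrix m n R) (B : Matrix n m R) :
    ∑ f : m → n, (∏ i, A i (f i)) * (B.submatrix f id).det =
      ∑ f : m ↪ n, (∏ i, A i (f i)) * (B.submatrix f id).det := by
  set g : (m → n) → R := fun f => (∏ i, A i (f i)) * (B.submatrix f id).det
  calc ∑ f, g f = ∑ f with Function.Injective f, g f :=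
        (sum_filter_of_ne fun f _ hf => by_contra fun hinj =>
          hf (mul_eq_zero_of_right _ (det_submatrix_eq_zero_of_not_injective B hinj))).symm
    _ = ∑ f : {f : m → n // Function.Injective f}, g f := sum_subtype _ (by simp) g
    _ = ∑ f : m ↪ n, g f := Equiv.sum_comp (Equiv.subtypeInjectiveEquivEmbedding m n) (g ·)

theorem sum_perm_prod_mul_det_submatrix [Fintype m] [DecidableEq m] (A : Matrix m n R)
    (B : Matrix n m R) (g : m → n) :
    ∑ σ : Equiv.Perm m, (∏ i, A i (g (σ i))) * (B.submatrix (g ∘ σ) id).det =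
      (A.submatrix id g).det * (B.submatrix g id).det := by
  rw [← det_transpose, det_apply, Finset.sum_mul]
  refine Fintype.sum_congr _ _ fun σ => ?_
  rw [show B.submatrix (g ∘ σ) id = (B.submatrix g id).submatrix σ id from rfl, det_permute,
    Units.smul_def, zsmul_eq_mul]
  simp only [transpose_apply, submatrix_apply, id]
  ring

theorem det_mul_eq_sum_det_mul_det [Fintype n] [LinearOrder n] {s : ℕ}
    (A : Matrix (Fin s) n R) (B : Matrix n (Fin s) R) :
    (A * B).det = ∑ S : {S : Finset n // #S = s},
      (A.submatrix id (S.1.orderEmbOfFin S.2)).det *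
        (B.submatrix (S.1.orderEmbOfFin S.2) id).det := by
  rw [det_mul_eq_sum_prod_mul_det_submatrix, sum_prod_mul_det_submatrix_eq_sum_embedding,
    ← embOfFinsetPerm_bijective.sum_comp, Fintype.sum_prod_type]
  exact Fintype.sum_congr _ _ fun S => sum_perm_prod_mul_det_submatrix A B (S.1.orderEmbOfFin S.2)

theorem det_submatrix_mul [Fintype n] [LinearOrder n] {s : ℕ} (A : Matrix m n R)
    (B : Matrix n o R) (r : Fin s → m) (c : Fin s → o) :
    ((A * B).submatrix r c).det = ∑ S : {S : Finset n // #S = s},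
      (A.submatrix r (S.1.orderEmbOfFin S.2)).det *
        (B.submatrix (S.1.orderEmbOfFin S.2) c).det := by
  rw [submatrix_mul A B r id c Function.bijective_id, det_mul_eq_sum_det_mul_det]
  rfl

end Matrix

namespace RatFunc

variable {k : Type*} [Field k]

theorem denom_dvd_iff_mul_mem_range {x : RatFunc k} {D : k[X]} (hD : D ≠ 0) :
    x.denom ∣ D ↔ x * algebraMap k[X] (RatFunc k) D ∈ (algebraMap k[X] (RatFunc k)).range := by
  rw [denom_dvd hD]
  refine exists_congr fun p => ?_
  rw [eq_div_iff (algebraMap_ne_zero hD), eq_comm]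

theorem denom_sum_dvd {ι : Type*} {t : Finset ι} {x : ι → RatFunc k} {D : k[X]} (hD : D ≠ 0)
    (h : ∀ i ∈ t, (x i).denom ∣ D) : (∑ i ∈ t, x i).denom ∣ D := by
  rw [denom_dvd_iff_mul_mem_range hD, Finset.sum_mul]
  exact Subring.sum_mem _ fun i hi => (denom_dvd_iff_mul_mem_range hD).mp (h i hi)

end RatFunc

section DetDen

variable {k : Type*} [Field k] [DecidableEq k] {m p : ℕ}

theorem detDen_ne_zero (ℓ : ℕ) (R : Matrix (Fin m) (Fin p) (RatFunc k)) : detDen ℓ R ≠ 0 := by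
  rw [detDen, Ne, Finset.lcm_eq_zero_iff]
  rintro ⟨t, -, h⟩
  exact RatFunc.denom_ne_zero _ h

theorem denom_det_submatrix_dvd_detDen {ℓ : ℕ} (R : Matrix (Fin m) (Fin p) (RatFunc k))
    (s : Fin (ℓ + 1)) (r : Fin s → Fin m) (c : Fin s → Fin p) :
    (R.submatrix r c).det.denom ∣ detDen ℓ R :=
  (Finset.dvd_lcm (f := fun t : Σ s : Fin (ℓ + 1), (Fin s → Fin m) × (Fin s → Fin p) =>
    (R.submatrix t.2.1 t.2.2).det.denom) (Finset.mem_univ ⟨s, r, c⟩) :)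

end DetDen

/-- Determinantal denominators of a product: φ_ℓ(R₁R₂) divides φ_ℓ(R₁)·φ_ℓ(R₂). -/
theorem detDen_mul (k : Type*) [Field k] [DecidableEq k] (m p h : ℕ)
    (R₁ : Matrix (Fin m) (Fin p) (RatFunc k)) (R₂ : Matrix (Fin p) (Fin h) (RatFunc k)) (ℓ : ℕ) :
    detDen ℓ (R₁ * R₂) ∣ detDen ℓ R₁ * detDen ℓ R₂ := by
  refine Finset.lcm_dvd fun ⟨s, r, c⟩ _ => ?_
  rw [Matrix.det_submatrix_mul]
  refine RatFunc.denom_sum_dvd (mul_ne_zero (detDen_ne_zero ℓ R₁) (detDen_ne_zero ℓ R₂))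
    fun S _ => (RatFunc.denom_mul_dvd _ _).trans (mul_dvd_mul ?_ ?_)
  · exact denom_det_submatrix_dvd_detDen R₁ s r _
  · exact denom_det_submatrix_dvd_detDen R₂ s _ c
end

section
/- Let R be a non-singular m×m rational matrix over k(x) with det R = c·α/β where c ∈ k*, α, β ∈ k[x] monic and coprime. Then β·φ_m(R^{-1}) = α·φ_m(R). -/
/-!
By Jacobi's complementary minor identity, every `s × s` minor of `R⁻¹` equals `± (det R)⁻¹`
times the complementary `(m - s) × (m - s)` minor `μ` of `R`, i.e. a nonzero constant times
`(β / α) μ`. Writing `lcm (den μ, β) = β L`, the product `(β / α) μ · α L` is a polynomial, so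
`β · den ∣ α · lcm (den μ, β)`, and this divides `α φ_m(R)` because `β = den (det R)` is itself
the denominator of a minor. Hence `β φ_m(R⁻¹) ∣ α φ_m(R)`. Applied to `R⁻¹`, whose determinant
is `c⁻¹ β / α`, this gives the converse divisibility, and both sides are monic.
-/

open Polynomial

theorem Function.Injective.exists_equiv_sum_inl {s m : ℕ} {f : Fin s → Fin m}
    (hf : Function.Injective f) : ∃ e : Fin s ⊕ Fin (m - s) ≃ Fin m, ∀ a, e (.inl a) = f a := by
  classical
  have hcard : Fintype.card ↥(Set.range f)ᶜ = m - s := by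
    rw [Fintype.card_compl_set, Set.card_range_of_injective hf, Fintype.card_fin,
      Fintype.card_fin]
  refine ⟨(Equiv.sumCongr (Equiv.ofInjective f hf) (Fintype.equivFinOfCardEq hcard).symm).trans
    (Equiv.Set.sumCompl (Set.range f)), fun a => ?_⟩
  simp

namespace Matrix

variable {K : Type*} [CommRing K]

theorem det_toBlocks₁₁_inv_mul_det {s t : Type*} [Fintype s] [Fintype t] [DecidableEq s]
    [DecidableEq t] (A : Matrix (s ⊕ t) (s ⊕ t) K) (hA : IsUnit A.det) :
    A⁻¹.toBlocks₁₁.det * A.det = A.toBlocks₂₂.det := by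
  have hAB := mul_nonsing_inv A hA
  have key : A * fromBlocks A⁻¹.toBlocks₁₁ 0 A⁻¹.toBlocks₂₁ 1 =
      fromBlocks 1 A.toBlocks₁₂ 0 A.toBlocks₂₂ := by
    ext (i | i) (j | j)
    · simpa [mul_apply, Fintype.sum_sum_type, toBlocks₁₁, toBlocks₂₁, one_apply] using
        congrFun (congrFun hAB (.inl i)) (.inl j)
    · simp [mul_apply, Fintype.sum_sum_type, one_apply, toBlocks₁₂]
    · simpa [mul_apply, Fintype.sum_sum_type, toBlocks₁₁, toBlocks₂₁, one_apply] using
        congrFun (congrFun hAB (.inr i)) (.inl j)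
    · simp [mul_apply, Fintype.sum_sum_type, one_apply, toBlocks₂₂]
  simpa [det_fromBlocks_zero₁₂, det_fromBlocks_zero₂₁, mul_comm] using congrArg det key

theorem det_submatrix_inv_mul_det {n s t : Type*} [Fintype n] [DecidableEq n] [Fintype s]
    [Fintype t] [DecidableEq s] [DecidableEq t] (R : Matrix n n K) (hR : IsUnit R.det)
    (e₁ e₂ : s ⊕ t ≃ n) :
    (R⁻¹.submatrix (e₁ ∘ Sum.inl) (e₂ ∘ Sum.inl)).det * R.det =
      Equiv.Perm.sign (e₂.trans e₁.symm) * (R.submatrix (e₂ ∘ Sum.inr) (e₁ ∘ Sum.inr)).det := by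
  set ε : K := ((Equiv.Perm.sign (e₂.trans e₁.symm) : ℤ) : K)
  have hε : ε * ε = 1 := by
    simp only [ε, ← Int.cast_mul, ← Units.val_mul, Int.units_mul_self, Units.val_one,
      Int.cast_one]
  have hdet : (R.submatrix e₂ e₁).det = ε * R.det := by
    rw [← det_submatrix_equiv_self e₁ R]
    convert det_permute (e₂.trans e₁.symm) (R.submatrix e₁ e₁) using 2
    ext
    simp
  have hunit : IsUnit (R.submatrix e₂ e₁).det := by
    rw [← isUnit_iff_isUnit_det] at hR ⊢
    exact (isUnit_submatrix_equiv e₂ e₁).2 hR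
  have h := det_toBlocks₁₁_inv_mul_det _ hunit
  rw [inv_submatrix_equiv, hdet] at h
  calc _ = ε * ((R⁻¹.submatrix (e₁ ∘ Sum.inl) (e₂ ∘ Sum.inl)).det * (ε * R.det)) := by
        linear_combination (R⁻¹.submatrix (e₁ ∘ Sum.inl) (e₂ ∘ Sum.inl)).det * R.det * (-hε)
    _ = _ := congrArg (ε * ·) h

theorem exists_det_submatrix_inv_mul_det {m s : ℕ}
    (R : Matrix (Fin m) (Fin m) K) (hR : IsUnit R.det) {r c : Fin s → Fin m}
    (hr : Function.Injective r) (hc : Function.Injective c) :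
    ∃ (ε : ℤˣ) (r' c' : Fin (m - s) → Fin m),
      (R⁻¹.submatrix r c).det * R.det = ε * (R.submatrix r' c').det := by
  obtain ⟨e₁, he₁⟩ := hr.exists_equiv_sum_inl
  obtain ⟨e₂, he₂⟩ := hc.exists_equiv_sum_inl
  refine ⟨Equiv.Perm.sign (e₂.trans e₁.symm), e₂ ∘ Sum.inr, e₁ ∘ Sum.inr, ?_⟩
  convert R.det_submatrix_inv_mul_det hR e₁ e₂ using 4 <;> ext <;> simp [he₁, he₂]

end Matrix

namespace RatFunc

variable {k : Type*} [Field k]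

theorem denom_C_mul {u : k} (hu : u ≠ 0) (f : RatFunc k) : (C u * f).denom = f.denom := by
  have hdvd (v : k) (g : RatFunc k) : (C v * g).denom ∣ g.denom := by
    simpa [denom_C] using denom_mul_dvd (C v) g
  refine eq_of_monic_of_associated (monic_denom _) (monic_denom _)
    (associated_of_dvd_dvd (hdvd u f) ?_)
  have h := hdvd u⁻¹ (C u * f)
  rwa [← mul_assoc, ← map_mul, inv_mul_cancel₀ hu, map_one, one_mul] at h

theorem denom_div_eq_of_isCoprime {p q : k[X]} (hq : q.Monic) (h : IsCoprime p q) :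
    (algebraMap k[X] (RatFunc k) p / algebraMap k[X] (RatFunc k) q).denom = q := by
  classical
  have hgcd : gcd p q = 1 := by
    rw [← normalize_gcd, normalize_eq_one]
    exact (gcd_isUnit_iff p q).2 h
  rw [denom_div p hq.ne_zero, hgcd, EuclideanDomain.div_one, hq.leadingCoeff, inv_one, C_1,
    one_mul]

theorem mul_denom_div_mul_dvd [DecidableEq k] {α β : k[X]} (hα : α ≠ 0) (hβ : β ≠ 0)
    (f : RatFunc k) :
    β * (algebraMap k[X] (RatFunc k) β / algebraMap k[X] (RatFunc k) α * f).denom ∣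
      α * lcm f.denom β := by
  obtain ⟨L, hL⟩ := dvd_lcm_right f.denom β
  obtain ⟨E, hE⟩ := dvd_lcm_left f.denom β
  have hL0 : L ≠ 0 := by
    rintro rfl
    simp [f.denom_ne_zero, hβ] at hL
  rw [hL, mul_left_comm]
  refine mul_dvd_mul_left β ((denom_dvd (mul_ne_zero hα hL0)).2 ⟨f.num * E, ?_⟩)
  have hβL : algebraMap k[X] (RatFunc k) β * algebraMap _ _ L =
      algebraMap _ _ f.denom * algebraMap _ _ E := by
    rw [← map_mul, ← map_mul, ← hL, hE]
  have := algebraMap_ne_zero hα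
  have := algebraMap_ne_zero hL0
  have := algebraMap_ne_zero f.denom_ne_zero
  conv_lhs => rw [← num_div_denom f]
  rw [map_mul, map_mul]
  field_simp
  linear_combination algebraMap k[X] (RatFunc k) f.num * hβL

end RatFunc

section detDen

variable {k : Type*} [Field k] [DecidableEq k]

theorem dvd_detDen {m p ℓ s : ℕ} (hs : s ≤ ℓ) (R : Matrix (Fin m) (Fin p) (RatFunc k))
    (r : Fin s → Fin m) (c : Fin s → Fin p) : (R.submatrix r c).det.denom ∣ detDen ℓ R := by
  let t : Σ s : Fin (ℓ + 1), (Fin s → Fin m) × (Fin s → Fin p) :=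
    ⟨⟨s, Nat.lt_succ_of_le hs⟩, r, c⟩
  rw [detDen]
  exact Finset.dvd_lcm (f := fun t => (R.submatrix t.2.1 t.2.2).det.denom) (Finset.mem_univ t)

theorem denom_det_dvd_detDen {m : ℕ} (R : Matrix (Fin m) (Fin m) (RatFunc k)) :
    R.det.denom ∣ detDen m R := by
  simpa using dvd_detDen le_rfl R id id

theorem detDen_monic {m p : ℕ} (ℓ : ℕ) (R : Matrix (Fin m) (Fin p) (RatFunc k)) :
    (detDen ℓ R).Monic := by
  have h0 : detDen ℓ R ≠ 0 := by
    rw [detDen, Ne, Finset.lcm_eq_zero_iff]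
    rintro ⟨t, -, ht⟩
    exact RatFunc.denom_ne_zero _ ht
  have hnorm : normalize (detDen ℓ R) = detDen ℓ R := Finset.normalize_lcm
  exact hnorm ▸ monic_normalize h0

theorem mul_denom_det_submatrix_inv_dvd {m s : ℕ} {R : Matrix (Fin m) (Fin m) (RatFunc k)}
    (hR : IsUnit R.det) {c : k} (hc : c ≠ 0) {α β : k[X]} (hα : α ≠ 0) (hβ : β ≠ 0)
    (hdet : R.det = RatFunc.C c *
      (algebraMap k[X] (RatFunc k) α / algebraMap k[X] (RatFunc k) β))
    (hβR : β ∣ detDen m R) (r col : Fin s → Fin m) :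
    β * (R⁻¹.submatrix r col).det.denom ∣ α * detDen m R := by
  by_cases hinj : Function.Injective r ∧ Function.Injective col
  · obtain ⟨ε, r', c', hjac⟩ := R.exists_det_submatrix_inv_mul_det hR hinj.1 hinj.2
    have hεk : ((ε : ℤ) : k) ≠ 0 := by rcases Int.units_eq_one_or ε with rfl | rfl <;> simp
    have hminor : (R⁻¹.submatrix r col).det = RatFunc.C (((ε : ℤ) : k) * c⁻¹) *
        (algebraMap k[X] (RatFunc k) β / algebraMap k[X] (RatFunc k) α *
          (R.submatrix r' c').det) := by
      have := RatFunc.algebraMap_ne_zero hα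
      have := RatFunc.algebraMap_ne_zero hβ
      have : RatFunc.C c ≠ 0 := by simpa using hc
      rw [hdet] at hjac
      simp only [map_inv₀, map_mul, map_intCast]
      field_simp at hjac ⊢
      linear_combination hjac
    rw [hminor, RatFunc.denom_C_mul (mul_ne_zero hεk (inv_ne_zero hc))]
    exact (RatFunc.mul_denom_div_mul_dvd hα hβ _).trans
      (mul_dvd_mul_left α (lcm_dvd (dvd_detDen (by omega) R r' c') hβR))
  · have hzero : (R⁻¹.submatrix r col).det = 0 := by
      rcases not_and_or.1 hinj with h | h <;>
        obtain ⟨i, j, hij, hne⟩ := Function.not_injective_iff.1 h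
      · exact Matrix.det_zero_of_row_eq hne (by funext l; simp [hij])
      · exact Matrix.det_zero_of_column_eq hne (fun l => by simp [hij])
    rw [hzero, RatFunc.denom_zero, mul_one]
    exact dvd_mul_of_dvd_right hβR α

theorem mul_detDen_inv_dvd {m : ℕ} {R : Matrix (Fin m) (Fin m) (RatFunc k)}
    (hR : IsUnit R.det) {c : k} (hc : c ≠ 0) {α β : k[X]} (hα : α ≠ 0) (hβ : β.Monic)
    (hcop : IsCoprime α β)
    (hdet : R.det = RatFunc.C c *
      (algebraMap k[X] (RatFunc k) α / algebraMap k[X] (RatFunc k) β)) :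
    β * detDen m R⁻¹ ∣ α * detDen m R := by
  have hβR : β ∣ detDen m R := by
    rw [← RatFunc.denom_div_eq_of_isCoprime hβ hcop, ← RatFunc.denom_C_mul hc, ← hdet]
    exact denom_det_dvd_detDen R
  have ⟨D, hD⟩ := hβR
  rw [hD, mul_left_comm, mul_dvd_mul_iff_left hβ.ne_zero, detDen]
  refine Finset.lcm_dvd fun ⟨s, r, col⟩ _ => ?_
  rw [← mul_dvd_mul_iff_left hβ.ne_zero, mul_left_comm, ← hD]
  exact mul_denom_det_submatrix_inv_dvd hR hc hα hβ.ne_zero hdet hβR r col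

end detDen

/-- Determinantal denominator of the inverse: if R is non-singular with
det R = c·α/β, c ∈ k*, α, β ∈ k[x] monic and coprime, then β·φ_m(R⁻¹) = α·φ_m(R). -/
theorem detDen_inverse (k : Type*) [Field k] [DecidableEq k] (m : ℕ)
    (R : Matrix (Fin m) (Fin m) (RatFunc k)) (hR : IsUnit R.det)
    (c : k) (hc : c ≠ 0) (α β : Polynomial k) (hα : α.Monic) (hβ : β.Monic)
    (hcop : IsCoprime α β)
    (hdet : R.det = RatFunc.C c * (algebraMap (Polynomial k) (RatFunc k) α /
      algebraMap (Polynomial k) (RatFunc k) β)) :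
    β * detDen m R⁻¹ = α * detDen m R := by
  have hdet_inv : R⁻¹.det = RatFunc.C c⁻¹ *
      (algebraMap k[X] (RatFunc k) β / algebraMap k[X] (RatFunc k) α) := by
    rw [Matrix.det_nonsing_inv, hdet, Ring.inverse_eq_inv, mul_inv, map_inv₀, inv_div]
  have h₁ := mul_detDen_inv_dvd hR hc hα.ne_zero hβ hcop hdet
  have h₂ := mul_detDen_inv_dvd (R.isUnit_nonsing_inv_det hR) (inv_ne_zero hc) hβ.ne_zero hα
    hcop.symm hdet_inv
  rw [Matrix.nonsing_inv_nonsing_inv R hR] at h₂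
  exact eq_of_monic_of_associated (hβ.mul (detDen_monic m _)) (hα.mul (detDen_monic m R))
    (associated_of_dvd_dvd h₁ h₂)
end

section
/- With T = B L^{-1} C, L = xI_m − A as above and θ = ∂_x + T acting on n×n rational matrices columnwise (θ(U) applies θ to each column), for all j ≥ 1: θ^j(I_n) = B L^{-1} Λ_1^j C, where Λ_1^j = Π_{ℓ=1}^{j−1} [(CB − ℓI_m)L^{-1}]. -/
set_option synthInstance.maxHeartbeats 1000000

open Polynomial

/-- The standard derivative on the rational function field `k(x)`. -/
noncomputable def ratDeriv {k : Type*} [Field k] (f : RatFunc k) : RatFunc k :=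
  algebraMap (Polynomial k) (RatFunc k)
      (derivative f.num * f.denom - f.num * derivative f.denom) /
    (algebraMap (Polynomial k) (RatFunc k) f.denom) ^ 2

/-- The ordered product `Λ_i^j = ∏_{ℓ=i}^{j-1} [(CB - ℓ I_m) L⁻¹]`, with `Λ_j^j = I_m`. -/
noncomputable def Lam {k : Type*} [Field k] {m : ℕ}
    (CB L : Matrix (Fin m) (Fin m) (RatFunc k)) (i j : ℕ) :
    Matrix (Fin m) (Fin m) (RatFunc k) :=
  ((List.range (j - i)).map fun t =>
    (CB - (((i + t : ℕ) : RatFunc k) • (1 : Matrix (Fin m) (Fin m) (RatFunc k)))) * L⁻¹).prod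

/-- The pseudo-linear map `θ = ∂_x + T` applied columnwise to `n × n` rational matrices. -/
noncomputable def pseudoLinMat {k : Type*} [Field k] {n : ℕ}
    (T : Matrix (Fin n) (Fin n) (RatFunc k)) (U : Matrix (Fin n) (Fin n) (RatFunc k)) :
    Matrix (Fin n) (Fin n) (RatFunc k) :=
  U.map ratDeriv + T * U

section Aux

variable {k : Type*} [Field k]

lemma ratDeriv_div (p q : Polynomial k) (hq : q ≠ 0) :
    ratDeriv ((algebraMap (Polynomial k) (RatFunc k) p) / algebraMap (Polynomial k) (RatFunc k) q) =
      algebraMap (Polynomial k) (RatFunc k) (derivative p * q - p * derivative q) /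
        (algebraMap (Polynomial k) (RatFunc k) q) ^ 2 := by
  set f := (algebraMap (Polynomial k) (RatFunc k) p) / algebraMap (Polynomial k) (RatFunc k) q with hf
  have hq' : algebraMap (Polynomial k) (RatFunc k) q ≠ 0 := RatFunc.algebraMap_ne_zero hq
  have hd' : algebraMap (Polynomial k) (RatFunc k) f.denom ≠ 0 :=
    RatFunc.algebraMap_ne_zero (f.denom_ne_zero)
  -- cross identity: f.num * q = p * f.denom
  have hcross : f.num * q = p * f.denom := by
    have h1 : algebraMap (Polynomial k) (RatFunc k) f.num / algebraMap _ _ f.denom = f :=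
      RatFunc.num_div_denom f
    rw [hf, div_eq_div_iff hd' hq'] at h1
    exact_mod_cast RatFunc.algebraMap_injective k (by push_cast [map_mul] at h1 ⊢; exact h1)
  have hcross' : derivative f.num * q + f.num * derivative q
      = derivative p * f.denom + p * derivative f.denom := by
    have := congrArg derivative hcross
    simpa [derivative_mul] using this
  have key : (derivative f.num * f.denom - f.num * derivative f.denom) * q ^ 2
      = (derivative p * q - p * derivative q) * f.denom ^ 2 := by
    linear_combination (f.denom * q) * hcross' - (derivative q * f.denom + q * derivative f.denom) * hcross
  unfold ratDeriv
  rw [div_eq_div_iff (pow_ne_zero 2 hd') (pow_ne_zero 2 hq')]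
  rw [← map_pow, ← map_pow, ← map_mul, ← map_mul, key]

lemma ratDeriv_eq (f : RatFunc k) :
    ratDeriv f = algebraMap (Polynomial k) (RatFunc k)
      (derivative f.num * f.denom - f.num * derivative f.denom) /
      (algebraMap (Polynomial k) (RatFunc k) f.denom) ^ 2 := rfl

lemma ratDeriv_algebraMap (p : Polynomial k) :
    ratDeriv (algebraMap (Polynomial k) (RatFunc k) p) =
      algebraMap (Polynomial k) (RatFunc k) (derivative p) := by
  have := ratDeriv_div p 1 one_ne_zero
  simpa using this

lemma ratDeriv_add (f g : RatFunc k) : ratDeriv (f + g) = ratDeriv f + ratDeriv g := by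
  have h1 : algebraMap (Polynomial k) (RatFunc k) f.num / algebraMap _ _ f.denom = f :=
    RatFunc.num_div_denom f
  have h2 : algebraMap (Polynomial k) (RatFunc k) g.num / algebraMap _ _ g.denom = g :=
    RatFunc.num_div_denom g
  have hq1 : algebraMap (Polynomial k) (RatFunc k) f.denom ≠ 0 :=
    RatFunc.algebraMap_ne_zero f.denom_ne_zero
  have hq2 : algebraMap (Polynomial k) (RatFunc k) g.denom ≠ 0 :=
    RatFunc.algebraMap_ne_zero g.denom_ne_zero
  have hsum : f + g = algebraMap (Polynomial k) (RatFunc k)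
      (f.num * g.denom + f.denom * g.num) / algebraMap _ _ (f.denom * g.denom) := by
    conv_lhs => rw [← h1, ← h2]
    rw [div_add_div _ _ hq1 hq2, map_add, map_mul, map_mul, map_mul]
  rw [hsum, ratDeriv_div _ _ (mul_ne_zero f.denom_ne_zero g.denom_ne_zero),
    ratDeriv_eq f, ratDeriv_eq g]
  simp only [derivative_add, derivative_mul, map_add, map_mul, map_sub]
  field_simp
  ring

lemma ratDeriv_mul_aux (p₁ q₁ p₂ q₂ : Polynomial k) (hq₁ : q₁ ≠ 0) (hq₂ : q₂ ≠ 0) :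
    ratDeriv ((algebraMap (Polynomial k) (RatFunc k) p₁ / algebraMap _ _ q₁) *
      (algebraMap (Polynomial k) (RatFunc k) p₂ / algebraMap _ _ q₂)) =
      ratDeriv (algebraMap (Polynomial k) (RatFunc k) p₁ / algebraMap _ _ q₁) *
        (algebraMap (Polynomial k) (RatFunc k) p₂ / algebraMap _ _ q₂) +
      (algebraMap (Polynomial k) (RatFunc k) p₁ / algebraMap _ _ q₁) *
        ratDeriv (algebraMap (Polynomial k) (RatFunc k) p₂ / algebraMap _ _ q₂) := by
  have hq₁' : algebraMap (Polynomial k) (RatFunc k) q₁ ≠ 0 := RatFunc.algebraMap_ne_zero hq₁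
  have hq₂' : algebraMap (Polynomial k) (RatFunc k) q₂ ≠ 0 := RatFunc.algebraMap_ne_zero hq₂
  rw [div_mul_div_comm, ← map_mul, ← map_mul,
    ratDeriv_div _ _ (mul_ne_zero hq₁ hq₂), ratDeriv_div _ _ hq₁, ratDeriv_div _ _ hq₂]
  simp only [derivative_mul, map_add, map_mul, map_sub]
  field_simp
  ring

lemma ratDeriv_mul (f g : RatFunc k) : ratDeriv (f * g) = ratDeriv f * g + f * ratDeriv g := by
  have key := ratDeriv_mul_aux f.num f.denom g.num g.denom f.denom_ne_zero g.denom_ne_zero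
  rwa [RatFunc.num_div_denom, RatFunc.num_div_denom] at key

lemma ratDeriv_zero : ratDeriv (0 : RatFunc k) = 0 := by
  have := ratDeriv_algebraMap (0 : Polynomial k)
  simpa using this

lemma ratDeriv_one : ratDeriv (1 : RatFunc k) = 0 := by
  have := ratDeriv_algebraMap (1 : Polynomial k)
  simpa using this

lemma ratDeriv_C (a : k) : ratDeriv (RatFunc.C a) = 0 := by
  have := ratDeriv_algebraMap (Polynomial.C a)
  simpa [RatFunc.algebraMap_C] using this

lemma ratDeriv_X : ratDeriv (RatFunc.X : RatFunc k) = 1 := by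
  have := ratDeriv_algebraMap (Polynomial.X : Polynomial k)
  simpa [RatFunc.algebraMap_X] using this

lemma ratDeriv_neg (f : RatFunc k) : ratDeriv (-f) = -ratDeriv f := by
  have h := ratDeriv_add f (-f)
  simp only [add_neg_cancel, ratDeriv_zero] at h
  linear_combination -h

lemma ratDeriv_sub (f g : RatFunc k) : ratDeriv (f - g) = ratDeriv f - ratDeriv g := by
  rw [sub_eq_add_neg, ratDeriv_add, ratDeriv_neg, sub_eq_add_neg]

lemma ratDeriv_natCast (n : ℕ) : ratDeriv ((n : RatFunc k)) = 0 := by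
  have := ratDeriv_algebraMap ((n : Polynomial k))
  simpa using this

/-- `ratDeriv` as an additive monoid hom. -/
noncomputable def ratDerivHom : RatFunc k →+ RatFunc k where
  toFun := ratDeriv
  map_zero' := ratDeriv_zero
  map_add' := ratDeriv_add

section MatrixDeriv

variable {a b c : ℕ}

lemma matD_mul (M : Matrix (Fin a) (Fin b) (RatFunc k)) (N : Matrix (Fin b) (Fin c) (RatFunc k)) :
    (M * N).map ratDeriv = M.map ratDeriv * N + M * N.map ratDeriv := by
  ext i j
  simp only [Matrix.map_apply, Matrix.mul_apply, Matrix.add_apply]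
  rw [show ratDeriv (∑ x, M i x * N x j) = ratDerivHom (∑ x, M i x * N x j) from rfl, map_sum,
    ← Finset.sum_add_distrib]
  congr 1; ext x
  show ratDeriv (M i x * N x j) = _
  rw [ratDeriv_mul]

lemma matD_add (M N : Matrix (Fin a) (Fin b) (RatFunc k)) :
    (M + N).map ratDeriv = M.map ratDeriv + N.map ratDeriv := by
  ext i j; simp [Matrix.map_apply, ratDeriv_add]

lemma matD_one : (1 : Matrix (Fin a) (Fin a) (RatFunc k)).map ratDeriv = 0 := by
  ext i j
  simp only [Matrix.map_apply, Matrix.one_apply, Matrix.zero_apply]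
  split <;> simp [ratDeriv_one, ratDeriv_zero]

lemma matD_constMap (A : Matrix (Fin a) (Fin b) k) :
    (A.map RatFunc.C).map ratDeriv = 0 := by
  ext i j; simp [Matrix.map_apply, ratDeriv_C]

lemma matD_smul_one (c : RatFunc k) (hc : ratDeriv c = 0) :
    ((c • (1 : Matrix (Fin a) (Fin a) (RatFunc k)))).map ratDeriv = 0 := by
  ext i j
  simp only [Matrix.map_apply, Matrix.smul_apply, Matrix.one_apply, Matrix.zero_apply,
    smul_eq_mul]
  split <;> simp [ratDeriv_zero, hc, mul_one, mul_zero]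

lemma matD_sub (M N : Matrix (Fin a) (Fin b) (RatFunc k)) :
    (M - N).map ratDeriv = M.map ratDeriv - N.map ratDeriv := by
  ext i j; simp [Matrix.map_apply, Matrix.sub_apply, ratDeriv_sub]

end MatrixDeriv

section Main

variable {m : ℕ} (L CB : Matrix (Fin m) (Fin m) (RatFunc k))

lemma Lam_self (i : ℕ) : Lam CB L i i = 1 := by simp [Lam]

lemma Lam_succ (s : ℕ) :
    Lam CB L 1 (s + 2) = Lam CB L 1 (s + 1) *
      ((CB - (((1 + s : ℕ) : RatFunc k) • (1 : Matrix (Fin m) (Fin m) (RatFunc k)))) * L⁻¹) := by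
  simp [Lam, List.range_succ]

lemma key_step (hLu : IsUnit L.det) (hDL : L.map ratDeriv = 1)
    (hDCB : CB.map ratDeriv = 0) (s : ℕ) :
    (L⁻¹ * Lam CB L 1 (s + 1)).map ratDeriv + L⁻¹ * CB * (L⁻¹ * Lam CB L 1 (s + 1)) =
      L⁻¹ * Lam CB L 1 (s + 2) := by
  have h1 : L * L⁻¹ = 1 := Matrix.mul_nonsing_inv L hLu
  have h2 : L⁻¹ * L = 1 := Matrix.nonsing_inv_mul L hLu
  have hDinv : (L⁻¹).map ratDeriv = -(L⁻¹ * L⁻¹) := by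
    have h3 : (L * L⁻¹).map ratDeriv = 0 := by rw [h1, matD_one]
    rw [matD_mul, hDL, one_mul] at h3
    have h4 : L⁻¹ * (L⁻¹ + L * (L⁻¹).map ratDeriv) = L⁻¹ * 0 := by rw [h3]
    rw [mul_add, ← mul_assoc, h2, one_mul, mul_zero] at h4
    linear_combination (norm := noncomm_ring) h4
  induction s with
  | zero =>
    rw [Lam_succ, Lam_self]
    simp only [Nat.add_zero, Nat.cast_one, one_smul, mul_one]
    rw [hDinv]
    noncomm_ring
  | succ s ih =>
    have hc : ((1 + (s + 1) : ℕ) : RatFunc k) = ((1 + s : ℕ) : RatFunc k) + 1 := by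
      push_cast; ring
    set E : Matrix (Fin m) (Fin m) (RatFunc k) :=
      ((1 + s : ℕ) : RatFunc k) • (1 : Matrix (Fin m) (Fin m) (RatFunc k)) with hE
    have hDE : E.map ratDeriv = 0 := matD_smul_one _ (ratDeriv_natCast _)
    have hE' : ((1 + (s + 1) : ℕ) : RatFunc k) • (1 : Matrix (Fin m) (Fin m) (RatFunc k)) =
        E + 1 := by rw [hc, add_smul, one_smul]
    have hQ' : L⁻¹ * Lam CB L 1 (s + 2) =
        (L⁻¹ * Lam CB L 1 (s + 1)) * ((CB - E) * L⁻¹) := by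
      rw [Lam_succ L CB s, ← hE, ← mul_assoc]
    have hQ'' : L⁻¹ * Lam CB L 1 (s + 3) =
        (L⁻¹ * Lam CB L 1 (s + 2)) * ((CB - (E + 1)) * L⁻¹) := by
      rw [show s + 3 = (s + 1) + 2 from rfl, Lam_succ L CB (s + 1), hE', ← mul_assoc]
    have hD : (L⁻¹ * Lam CB L 1 (s + 1)).map ratDeriv =
        L⁻¹ * Lam CB L 1 (s + 2) - L⁻¹ * CB * (L⁻¹ * Lam CB L 1 (s + 1)) := by
      rw [← ih]; abel
    rw [show s + 1 + 1 = s + 2 from rfl, show s + 1 + 2 = s + 3 from rfl, hQ'', hQ',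
      matD_mul (L⁻¹ * Lam CB L 1 (s + 1)) ((CB - E) * L⁻¹), matD_mul (CB - E) L⁻¹,
      matD_sub, hDCB, hDE, hDinv, hD, hQ']
    noncomm_ring

end Main

end Aux

/-- With a state-space realisation `T = B L⁻¹ C`, `L = x I_m - A`, for all `j ≥ 1`:
`θ^j(I_n) = B L⁻¹ Λ_1^j C`. -/
theorem pseudoLin_iterate_one_eq (k : Type*) [Field k] [CharZero k] (m n : ℕ)
    (A : Matrix (Fin m) (Fin m) k) (B : Matrix (Fin n) (Fin m) k) (C : Matrix (Fin m) (Fin n) k)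
    (L : Matrix (Fin m) (Fin m) (RatFunc k))
    (hL : L = (RatFunc.X : RatFunc k) • (1 : Matrix (Fin m) (Fin m) (RatFunc k)) - A.map RatFunc.C)
    (hLu : IsUnit L.det)
    (T : Matrix (Fin n) (Fin n) (RatFunc k))
    (hT : T = B.map RatFunc.C * L⁻¹ * C.map RatFunc.C)
    (j : ℕ) (hj : 1 ≤ j) :
    (pseudoLinMat T)^[j] (1 : Matrix (Fin n) (Fin n) (RatFunc k)) =
      B.map RatFunc.C * L⁻¹ * Lam (C.map RatFunc.C * B.map RatFunc.C) L 1 j *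
        C.map RatFunc.C := by
  obtain ⟨s, rfl⟩ : ∃ s, j = s + 1 := ⟨j - 1, (Nat.succ_pred_eq_of_pos hj).symm⟩
  clear hj
  set Bm : Matrix (Fin n) (Fin m) (RatFunc k) := B.map RatFunc.C with hBm
  set Cm : Matrix (Fin m) (Fin n) (RatFunc k) := C.map RatFunc.C with hCm
  have hDL : L.map ratDeriv = 1 := by
    rw [hL]
    ext i j
    by_cases h : i = j <;>
      simp [Matrix.map_apply, Matrix.sub_apply, Matrix.smul_apply, Matrix.one_apply, h,
        ratDeriv_sub, ratDeriv_X, ratDeriv_C, ratDeriv_zero, ratDeriv_neg, smul_eq_mul]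
  have hDCB : (Cm * Bm).map ratDeriv = 0 := by
    rw [hCm, hBm, matD_mul, matD_constMap, matD_constMap]
    simp
  have sand : ∀ P : Matrix (Fin m) (Fin m) (RatFunc k),
      pseudoLinMat T (Bm * P * Cm) = Bm * (P.map ratDeriv + L⁻¹ * (Cm * Bm) * P) * Cm := by
    intro P
    show (Bm * P * Cm).map ratDeriv + T * (Bm * P * Cm) = _
    rw [hT, matD_mul (Bm * P) Cm, matD_mul Bm P, hBm, matD_constMap, ← hBm, hCm,
      matD_constMap, ← hCm]
    simp [Matrix.mul_assoc, Matrix.mul_add, Matrix.add_mul]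
  induction s with
  | zero =>
    rw [show (0 : ℕ) + 1 = 1 from rfl, Function.iterate_one]
    show (1 : Matrix (Fin n) (Fin n) (RatFunc k)).map ratDeriv + T * 1 = _
    rw [matD_one, Lam_self, Matrix.mul_one, Matrix.mul_one, zero_add, hT]
  | succ s ih =>
    rw [Function.iterate_succ_apply', ih, Matrix.mul_assoc Bm L⁻¹ (Lam (Cm * Bm) L 1 (s + 1)),
      sand (L⁻¹ * Lam (Cm * Bm) L 1 (s + 1)), key_step L (Cm * Bm) hLu hDL hDCB s,
      ← Matrix.mul_assoc Bm L⁻¹ (Lam (Cm * Bm) L 1 (s + 2))]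
end
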